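/- (Constant addition) Let d_embed = 5, M > 0, and c, x ∈ ℝ^D with ‖x‖_∞ + ‖c‖_∞ ≤ M. Let H ∈ ℝ^{5×ℓ} with ℓ ≥ 2D be the embedding matrix whose first row is (x¹,…,x^D, 0,…,0), second row zero, rows 3–4 positional encodings, fifth row all ones. Then there exists a transformer block B ∈ 𝓑(D, 6, d_embed) such that B(H) equals H except that the first-row entries in columns D+1,…,2D are x¹+c¹,…,x^D+c^D, with ‖θ_B‖_∞ ≤ O(ℓ² M² ‖H‖²_{∞,∞}). -/

import Mathlib

open scoped BigOperators
open Metric Set MeasureTheory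
open scoped Matrix

namespace Paper

noncomputable section

/-- ReLU activation. -/
def relu (x : ℝ) : ℝ := max x 0

/-- Euclidean space `ℝ^D` with the `ℓ²` norm. -/
abbrev Euc (D : ℕ) := EuclideanSpace ℝ (Fin D)

/-- Maximum absolute entry of a matrix (`‖H‖_{∞,∞}`). -/
def matSup {m n : ℕ} (H : Matrix (Fin m) (Fin n) ℝ) : ℝ := ⨆ i, ⨆ j, |H i j|

/-- Sup norm `‖x‖_∞` of a vector. -/
def supNorm {D : ℕ} (x : Fin D → ℝ) : ℝ := ⨆ i, |x i|

/-- An attention head: query, key and value matrices. -/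
structure Head (de : ℕ) where
  Q : Matrix (Fin de) (Fin de) ℝ
  K : Matrix (Fin de) (Fin de) ℝ
  V : Matrix (Fin de) (Fin de) ℝ

/-- Action of an attention head on an embedding matrix:
`A(H) = V H σ((K H)ᵀ Q H)` with `σ = ReLU`. -/
def Head.eval {de : ℕ} (A : Head de) {ℓ : ℕ} (H : Matrix (Fin de) (Fin ℓ) ℝ) :
    Matrix (Fin de) (Fin ℓ) ℝ :=
  A.V * H * ((A.K * H)ᵀ * (A.Q * H)).map relu

/-- Tokenwise action of an attention head:
`A(h_t) = Σ_j σ(⟨Q h_t, K h_j⟩) V h_j`. -/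
def Head.tokenEval {de ℓ : ℕ} (A : Head de) (H : Matrix (Fin de) (Fin ℓ) ℝ)
    (t : Fin ℓ) : Fin de → ℝ := fun i =>
  ∑ j : Fin ℓ,
    relu (∑ k, A.Q.mulVec (fun r => H r t) k * A.K.mulVec (fun r => H r j) k) *
      A.V.mulVec (fun r => H r j) i

/-- Maximum weight magnitude of an attention head. -/
def Head.wnorm {de : ℕ} (A : Head de) : ℝ := matSup A.Q ⊔ matSup A.K ⊔ matSup A.V

/-- A fully-connected (tokenwise) ReLU feed-forward network of depth `L`
and hidden width `w` on embedding dimension `de`. -/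
structure FFN (de w L : ℕ) where
  Win : Matrix (Fin w) (Fin de) ℝ
  bin : Fin w → ℝ
  Wmid : Fin L → Matrix (Fin w) (Fin w) ℝ
  bmid : Fin L → Fin w → ℝ
  Wout : Matrix (Fin de) (Fin w) ℝ
  bout : Fin de → ℝ

/-- Evaluation of a feed-forward ReLU network on one token. -/
def FFN.eval {de w L : ℕ} (f : FFN de w L) (x : Fin de → ℝ) : Fin de → ℝ :=
  let h0 : Fin w → ℝ := fun i => relu (∑ j, f.Win i j * x j + f.bin i)
  let hL : Fin w → ℝ := (List.finRange L).foldl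
    (fun h k => fun i => relu (∑ j, f.Wmid k i j * h j + f.bmid k i)) h0
  fun i => ∑ j, f.Wout i j * hL j + f.bout i

/-- Maximum weight magnitude of a feed-forward network. -/
def FFN.wnorm {de w L : ℕ} (f : FFN de w L) : ℝ :=
  matSup f.Win ⊔ (⨆ i, |f.bin i|) ⊔ (⨆ k, matSup (f.Wmid k)) ⊔
    (⨆ k, ⨆ i, |f.bmid k i|) ⊔ matSup f.Wout ⊔ (⨆ i, |f.bout i|)

/-- A two-layer feed-forward ReLU network. -/
structure TwoLayerFFN (de w : ℕ) where
  W1 : Matrix (Fin w) (Fin de) ℝ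
  b1 : Fin w → ℝ
  W2 : Matrix (Fin de) (Fin w) ℝ
  b2 : Fin de → ℝ

def TwoLayerFFN.eval {de w : ℕ} (f : TwoLayerFFN de w) (x : Fin de → ℝ) :
    Fin de → ℝ := fun i =>
  ∑ j, f.W2 i j * relu (∑ k, f.W1 j k * x k + f.b1 j) + f.b2 i

def TwoLayerFFN.wnorm {de w : ℕ} (f : TwoLayerFFN de w) : ℝ :=
  matSup f.W1 ⊔ (⨆ i, |f.b1 i|) ⊔ matSup f.W2 ⊔ (⨆ i, |f.b2 i|)

/-- A transformer block `B(H) = FFN(MHA(H)+H) + MHA(H) + H` with `m` attention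
heads and a tokenwise feed-forward network of depth `L` and width `w`;
this formalizes the class `𝓑(m, L, de)`. -/
structure Block (de m w L : ℕ) where
  heads : Fin m → Head de
  ffn : FFN de w L

def Block.eval {de m w L : ℕ} (B : Block de m w L) {ℓ : ℕ}
    (H : Matrix (Fin de) (Fin ℓ) ℝ) : Matrix (Fin de) (Fin ℓ) ℝ :=
  let H1 := (∑ j, (B.heads j).eval H) + H
  Matrix.of (fun i t => B.ffn.eval (fun r => H1 r t) i) + H1

def Block.wnorm {de m w L : ℕ} (B : Block de m w L) : ℝ :=
  (⨆ j, (B.heads j).wnorm) ⊔ B.ffn.wnorm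

/-- A transformer network: linear embedding, positional encoding, `LT` transformer
blocks (each with `mT` heads and FFNs of depth `LF`, width `wF`), and a decoding
layer returning the first entry of the last column. -/
structure TransformerNet (D LT mT de ℓ LF wF : ℕ) where
  emb : Fin de → Fin ℓ → Fin D → ℝ
  PE : Matrix (Fin de) (Fin ℓ) ℝ
  blocks : Fin LT → Block de mT wF LF

def TransformerNet.eval {D LT mT de ℓ LF wF : ℕ}
    (T : TransformerNet D LT mT de ℓ LF wF) (x : Fin D → ℝ) : ℝ :=
  let H0 : Matrix (Fin de) (Fin ℓ) ℝ :=
    T.PE + Matrix.of fun i t => ∑ j, T.emb i t j * x j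
  let HL := (List.finRange LT).foldl (fun H k => (T.blocks k).eval H) H0
  if h : 0 < de ∧ 0 < ℓ then HL ⟨0, h.1⟩ ⟨ℓ - 1, Nat.sub_lt h.2 Nat.one_pos⟩ else 0

/-- Maximum weight magnitude `‖θ‖_∞` of a transformer network. -/
def TransformerNet.wnorm {D LT mT de ℓ LF wF : ℕ}
    (T : TransformerNet D LT mT de ℓ LF wF) : ℝ :=
  (⨆ i, ⨆ t, ⨆ j, |T.emb i t j|) ⊔ matSup T.PE ⊔ (⨆ k, (T.blocks k).wnorm)

/-- Membership in the transformer class `𝒯(L_T, m_T, d_embed, ℓ, L_FFN, w_FFN, R, κ)`: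
sup-norm output bound `R` and weight magnitudes at most `κ`. -/
def TransformerNet.inClass {D LT mT de ℓ LF wF : ℕ}
    (T : TransformerNet D LT mT de ℓ LF wF) (R κ : ℝ) : Prop :=
  (∀ x : Fin D → ℝ, |T.eval x| ≤ R) ∧ T.wnorm ≤ κ

/-- Medial axis of a set. -/
def medialAxis {D : ℕ} (S : Set (Euc D)) : Set (Euc D) :=
  {x | ∃ p ∈ S, ∃ q ∈ S, p ≠ q ∧
    dist p x = infDist x S ∧ dist q x = infDist x S}

/-- Local reach `τ_M(v)`. -/
def localReach {D : ℕ} (S : Set (Euc D)) (v : Euc D) : ℝ :=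
  infDist v (medialAxis S)

/-- Reach `τ_M` of a set. -/
def reach {D : ℕ} (S : Set (Euc D)) : ℝ := ⨅ v ∈ S, localReach S v

/-- Geodesic distance on `S`: infimum of lengths of `C¹` curves in `S`. -/
def geoDist {D : ℕ} (S : Set (Euc D)) (v v' : Euc D) : ℝ :=
  sInf {l : ℝ | ∃ γ : ℝ → Euc D, (∀ t ∈ Icc (0:ℝ) 1, γ t ∈ S) ∧
    ContDiffOn ℝ 1 γ (Icc 0 1) ∧ γ 0 = v ∧ γ 1 = v' ∧
    l = ∫ t in (0:ℝ)..1, ‖deriv γ t‖}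

/-- Orthogonal projection onto `S` (a choice of nearest point, when one exists). -/
def projOn {D : ℕ} (S : Set (Euc D)) (x : Euc D) : Euc D :=
  Classical.epsilon fun y => y ∈ S ∧ dist x y = infDist x S

/-- A nonempty, compact, connected `d`-dimensional manifold `M ⊆ [0,1]^D`,
together with a choice of orthonormal tangent frames `P(v)`. -/
structure GoodManifold (D d : ℕ) where
  carrier : Set (Euc D)
  nonempty : carrier.Nonempty
  compact : IsCompact carrier
  connected : IsConnected carrier
  subset_cube : ∀ x ∈ carrier, ∀ i, x i ∈ Icc (0:ℝ) 1
  locallyEuclidean : ∀ v ∈ carrier, ∃ U : Set (Euc D), IsOpen U ∧ v ∈ U ∧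
    ∃ V : Set (EuclideanSpace ℝ (Fin d)), IsOpen V ∧
      Nonempty (↥(carrier ∩ U) ≃ₜ ↥V)
  frame : Euc D → Matrix (Fin D) (Fin d) ℝ
  frame_orthonormal : ∀ v ∈ carrier, (frame v)ᵀ * frame v = 1

/-- The tubular region `M(q)` around the manifold. -/
def GoodManifold.tube {D d : ℕ} (M : GoodManifold D d) (q : ℝ) : Set (Euc D) :=
  {x | ∃ v ∈ M.carrier, ∃ u : Euc D, x = v + u ∧
    (M.frame v)ᵀ.mulVec (fun i => u i) = 0 ∧
    ‖u‖ < q * localReach M.carrier v}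

/-- The volume `Vol(M)`: the `d`-dimensional Hausdorff measure of the carrier. -/
def vol {D d : ℕ} (M : GoodManifold D d) : ℝ :=
  (MeasureTheory.Measure.hausdorffMeasure (d : ℝ) M.carrier).toReal

/-- A maximal `δ`-separated net `{z₁,…,z_K}` of `M` w.r.t. geodesic distance. -/
structure SepNet {D d : ℕ} (M : GoodManifold D d) (δ : ℝ) (K : ℕ) where
  z : Fin K → Euc D
  mem : ∀ i, z i ∈ M.carrier
  sep : ∀ i j, i ≠ j → δ < geoDist M.carrier (z i) (z j)
  maximal : ∀ y ∈ M.carrier, ∃ i, geoDist M.carrier y (z i) ≤ δ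

/-- The bump functions `η̃_i` built from the net, with `p = (1+q)/2` and
`h = 6/(1 - q p⁻¹)`. -/
def etaTilde {D d K : ℕ} (M : GoodManifold D d) (q δ : ℝ) (N : SepNet M δ K)
    (i : Fin K) (x : Euc D) : ℝ :=
  relu (1 - (dist x (N.z i) / (((1 + q) / 2) * localReach M.carrier (N.z i))) ^ 2
    - (Real.sqrt (∑ j, (∑ r, M.frame (N.z i) r j * (x r - N.z i r)) ^ 2)
        / ((6 / (1 - q / ((1 + q) / 2))) * δ)) ^ 2)

/-- The normalized partition of unity `η_i = η̃_i / ‖η̃‖₁`. -/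
def etaFun {D d K : ℕ} (M : GoodManifold D d) (q δ : ℝ) (N : SepNet M δ K)
    (i : Fin K) (x : Euc D) : ℝ :=
  etaTilde M q δ N i x / ∑ j, etaTilde M q δ N j x

/-- Embedding matrix predicate for `d_embed = 5`: second row zero, rows 3–4 the
sinusoidal positional encodings, fifth row all ones. -/
def IsEmbed5 {ℓ : ℕ} (H : Matrix (Fin 5) (Fin ℓ) ℝ) : Prop :=
  (∀ t, H 1 t = 0) ∧
  (∀ t : Fin ℓ, H 2 t = Real.cos ((((t : ℕ) : ℝ) + 1) * Real.pi / (2 * ℓ))) ∧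
  (∀ t : Fin ℓ, H 3 t = Real.sin ((((t : ℕ) : ℝ) + 1) * Real.pi / (2 * ℓ))) ∧
  (∀ t, H 4 t = 1)

/-- Embedding matrix predicate for general `d_embed = e + 5 ≥ 5`: rows
`d_embed−2, d_embed−1` are the positional encodings and the last row is all ones. -/
def IsEmbedG (e ℓ : ℕ) (H : Matrix (Fin (e + 5)) (Fin ℓ) ℝ) : Prop :=
  (∀ t : Fin ℓ, H ⟨e + 2, by omega⟩ t
      = Real.cos ((((t : ℕ) : ℝ) + 1) * Real.pi / (2 * ℓ))) ∧
  (∀ t : Fin ℓ, H ⟨e + 3, by omega⟩ t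
      = Real.sin ((((t : ℕ) : ℝ) + 1) * Real.pi / (2 * ℓ))) ∧
  (∀ t, H ⟨e + 4, by omega⟩ t = 1)

/-!
After the ReLU, the attention pattern of head `j` is supported on the single pair (key `j`,
query `D + j`): its score rewards agreement of both positional encodings with the targeted ones,
and distinct encodings are at angle at least `π / (2ℓ)`. So the head writes `ε (xʲ + cʲ)`, for a
small `ε > 0`, into the zero second row of column `D + j`. The feed-forward network moves this
row, rescaled by `ε⁻¹`, to the first row and cancels it in the second, via
`z = relu z - relu (-z)`. The large factor `ε⁻¹` never appears as a weight: it is spread over `N`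
parallel hidden neurons that are averaged with weights `1 / N`, so all weights are at most `M²`.
-/

lemma relu_of_nonpos {x : ℝ} (h : x ≤ 0) : relu x = 0 := max_eq_right h

lemma relu_of_nonneg {x : ℝ} (h : 0 ≤ x) : relu x = x := max_eq_left h

lemma relu_nonneg (x : ℝ) : 0 ≤ relu x := le_max_right _ _

lemma relu_mul_of_nonneg {a : ℝ} (ha : 0 ≤ a) (x : ℝ) : relu (a * x) = a * relu x := by
  simp only [relu, mul_max_of_nonneg x 0 ha, mul_zero]

lemma relu_sub_relu_neg (x : ℝ) : relu x - relu (-x) = x := posPart_sub_negPart x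

lemma matSup_le {m n : ℕ} {A : Matrix (Fin m) (Fin n) ℝ} {b : ℝ} (hb : 0 ≤ b)
    (h : ∀ i j, |A i j| ≤ b) : matSup A ≤ b :=
  Real.iSup_le (fun i => Real.iSup_le (h i) hb) hb

lemma le_matSup {m n : ℕ} (A : Matrix (Fin m) (Fin n) ℝ) (i : Fin m) (j : Fin n) :
    |A i j| ≤ matSup A :=
  (le_ciSup (Set.finite_range _).bddAbove j).trans
    (le_ciSup (f := fun i => ⨆ j, |A i j|) (Set.finite_range _).bddAbove i)

lemma abs_le_supNorm {D : ℕ} (x : Fin D → ℝ) (i : Fin D) : |x i| ≤ supNorm x :=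
  le_ciSup (f := fun i => |x i|) (Set.finite_range _).bddAbove i

lemma supNorm_nonneg {D : ℕ} (x : Fin D → ℝ) : 0 ≤ supNorm x :=
  Real.iSup_nonneg fun i => abs_nonneg (x i)

lemma one_le_matSup_of_isEmbed5 {ℓ : ℕ} {H : Matrix (Fin 5) (Fin ℓ) ℝ} (hH : IsEmbed5 H)
    (hℓ : 0 < ℓ) : 1 ≤ matSup H := by
  simpa [hH.2.2.2] using le_matSup H 4 ⟨0, hℓ⟩

/-- Column `t` here is column `t + 1` of the paper. -/
def peAngle (ℓ : ℕ) (t : Fin ℓ) : ℝ := (((t : ℕ) : ℝ) + 1) * Real.pi / (2 * ℓ)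

lemma cos_pi_div_two_mul_lt_one {ℓ : ℕ} (hℓ : 0 < ℓ) : Real.cos (Real.pi / (2 * ℓ)) < 1 := by
  have hδ : 0 < Real.pi / (2 * ℓ) := by positivity
  have hδπ : Real.pi / (2 * ℓ) ≤ Real.pi := by
    rw [div_le_iff₀ (by positivity)]
    nlinarith [Real.pi_pos, (Nat.one_le_cast.mpr hℓ : (1 : ℝ) ≤ ℓ)]
  simpa using Real.cos_lt_cos_of_nonneg_of_le_pi le_rfl hδπ hδ

lemma cos_peAngle_sub_le {ℓ : ℕ} {s p : Fin ℓ} (hsp : s ≠ p) :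
    Real.cos (peAngle ℓ s - peAngle ℓ p) ≤ Real.cos (Real.pi / (2 * ℓ)) := by
  have hℓ : (0 : ℝ) < ℓ := by exact_mod_cast s.pos
  set δ := Real.pi / (2 * ℓ)
  have hdiff : peAngle ℓ s - peAngle ℓ p = ((s : ℝ) - p) * δ := by
    simp only [peAngle, δ]; ring
  have hgap : 1 ≤ |(s : ℝ) - p| ∧ |(s : ℝ) - p| ≤ ℓ := by
    have hne : ((s : ℕ) : ℤ) - (p : ℕ) ≠ 0 := by omega
    have hs : (s : ℝ) < ℓ := by exact_mod_cast s.isLt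
    have hp : (p : ℝ) < ℓ := by exact_mod_cast p.isLt
    refine ⟨by exact_mod_cast Int.one_le_abs hne, abs_sub_le_iff.mpr ⟨?_, ?_⟩⟩ <;>
      linarith [(Nat.cast_nonneg s : (0 : ℝ) ≤ s), (Nat.cast_nonneg p : (0 : ℝ) ≤ p)]
  have hδ : 0 < δ := by positivity
  rw [hdiff, ← Real.cos_abs, abs_mul, abs_of_pos hδ]
  refine Real.cos_le_cos_of_nonneg_of_le_pi hδ.le ?_ (le_mul_of_one_le_left hδ.le hgap.1)
  calc |(s : ℝ) - p| * δ ≤ ℓ * δ := mul_le_mul_of_nonneg_right hgap.2 hδ.le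
    _ ≤ Real.pi := by
      simp only [δ]; rw [mul_div_assoc', div_le_iff₀ (by positivity)]; nlinarith [Real.pi_pos]

/-- The score of key column `s` against query column `t` is
`a² (cos (θₛ - θₚ) + cos (θₜ - θ_q) - 1 - cos (π / (2ℓ)))`, positive only at `(s, t) = (p, q)`:
the head writes `μ H₀ₚ + γ`, scaled by that score, into row `1` of column `q`. -/
def copyHead (ℓ : ℕ) (a μ γ : ℝ) (p q : Fin ℓ) : Head 5 where
  Q := !![0, 0, 0, 0, a * Real.cos (peAngle ℓ p);
          0, 0, 0, 0, a * Real.sin (peAngle ℓ p);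
          0, 0, a * Real.cos (peAngle ℓ q), a * Real.sin (peAngle ℓ q), 0;
          0, 0, 0, 0, -(a * (1 + Real.cos (Real.pi / (2 * ℓ))));
          0, 0, 0, 0, 0]
  K := !![0, 0, a, 0, 0; 0, 0, 0, a, 0; 0, 0, 0, 0, a; 0, 0, 0, 0, a; 0, 0, 0, 0, 0]
  V := !![0, 0, 0, 0, 0; μ, 0, 0, 0, γ; 0, 0, 0, 0, 0; 0, 0, 0, 0, 0; 0, 0, 0, 0, 0]

section CopyHead

variable {ℓ : ℕ} {H : Matrix (Fin 5) (Fin ℓ) ℝ} (a μ γ : ℝ) (p q : Fin ℓ)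

lemma copyHead_score (hH : IsEmbed5 H) (s t : Fin ℓ) :
    (((copyHead ℓ a μ γ p q).K * H)ᵀ * ((copyHead ℓ a μ γ p q).Q * H)) s t =
      a ^ 2 * (Real.cos (peAngle ℓ s - peAngle ℓ p) + Real.cos (peAngle ℓ t - peAngle ℓ q)
        - 1 - Real.cos (Real.pi / (2 * ℓ))) := by
  obtain ⟨-, h2, h3, h4⟩ := hH
  have h2' : ∀ t, H 2 t = Real.cos (peAngle ℓ t) := h2
  have h3' : ∀ t, H 3 t = Real.sin (peAngle ℓ t) := h3
  simp only [Matrix.mul_apply, Matrix.transpose_apply, Fin.sum_univ_five]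
  simp [copyHead, h2', h3', h4, Real.cos_sub]
  ring

lemma relu_copyHead_score (hH : IsEmbed5 H) (s t : Fin ℓ) :
    relu ((((copyHead ℓ a μ γ p q).K * H)ᵀ * ((copyHead ℓ a μ γ p q).Q * H)) s t) =
      if s = p ∧ t = q then a ^ 2 * (1 - Real.cos (Real.pi / (2 * ℓ))) else 0 := by
  rw [copyHead_score a μ γ p q hH]
  have hs := Real.cos_le_one (peAngle ℓ s - peAngle ℓ p)
  have ht := Real.cos_le_one (peAngle ℓ t - peAngle ℓ q)
  split_ifs with hst
  · obtain ⟨rfl, rfl⟩ := hst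
    simp only [sub_self, Real.cos_zero]
    rw [relu_of_nonneg (by nlinarith [Real.cos_le_one (Real.pi / (2 * ℓ))])]
    ring
  · apply relu_of_nonpos
    refine mul_nonpos_of_nonneg_of_nonpos (sq_nonneg a) ?_
    rcases not_and_or.mp hst with hsp | htq
    · linarith [cos_peAngle_sub_le hsp]
    · linarith [cos_peAngle_sub_le htq]

lemma copyHead_eval (hH : IsEmbed5 H) :
    (copyHead ℓ a μ γ p q).eval H = Matrix.of fun i t =>
      if i = 1 ∧ t = q then a ^ 2 * (1 - Real.cos (Real.pi / (2 * ℓ))) * (μ * H 0 p + γ)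
      else 0 := by
  have hVH : ∀ i s, ((copyHead ℓ a μ γ p q).V * H) i s = if i = 1 then μ * H 0 s + γ else 0 := by
    intro i s
    fin_cases i <;> simp [copyHead, Matrix.mul_apply, Fin.sum_univ_five, hH.2.2.2]
  ext i t
  rw [Head.eval, Matrix.mul_apply]
  simp only [Matrix.map_apply, hVH, relu_copyHead_score a μ γ p q hH, Matrix.of_apply]
  by_cases hi : i = 1 <;> by_cases ht : t = q <;> simp [hi, ht, mul_comm]

lemma copyHead_wnorm_le {b : ℝ} (ha : 0 ≤ a) (hab : 2 * a ≤ b) (hμ : |μ| ≤ b) (hγ : |γ| ≤ b) :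
    (copyHead ℓ a μ γ p q).wnorm ≤ b := by
  have hb : 0 ≤ b := by linarith
  have ha' : |a| ≤ b := by rw [abs_of_nonneg ha]; linarith
  have hscaled : ∀ y, |y| ≤ 2 → |a| * |y| ≤ b := fun y hy => by
    rw [abs_of_nonneg ha]; nlinarith [abs_nonneg y]
  have hcos : ∀ θ, |a| * |Real.cos θ| ≤ b := fun θ =>
    hscaled _ ((Real.abs_cos_le_one θ).trans one_le_two)
  have hsin : ∀ θ, |a| * |Real.sin θ| ≤ b := fun θ =>
    hscaled _ ((Real.abs_sin_le_one θ).trans one_le_two)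
  have hbias : |a| * |1 + Real.cos (Real.pi / (2 * ℓ))| ≤ b := hscaled _ <| abs_le.mpr
    ⟨by linarith [Real.neg_one_le_cos (Real.pi / (2 * ℓ))],
      by linarith [Real.cos_le_one (Real.pi / (2 * ℓ))]⟩
  refine sup_le (sup_le ?_ ?_) ?_ <;> refine matSup_le hb fun i j => ?_ <;>
    fin_cases i <;> fin_cases j <;> simp [copyHead, hcos, hsin, hbias, ha', hμ, hγ, hb]

end CopyHead

section FFNLemmas

variable {de w L : ℕ} (f : FFN de w L)

lemma FFN.eval_eq_of_hidden_fixed (x : Fin de → ℝ) (h : Fin w → ℝ)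
    (hin : (fun i => relu (∑ j, f.Win i j * x j + f.bin i)) = h)
    (hmid : ∀ k, (fun i => relu (∑ j, f.Wmid k i j * h j + f.bmid k i)) = h) :
    f.eval x = fun i => ∑ j, f.Wout i j * h j + f.bout i := by
  simp only [FFN.eval]
  rw [hin, List.foldl_fixed' hmid]

lemma FFN.wnorm_le {b : ℝ} (hb : 0 ≤ b) (hWin : ∀ i j, |f.Win i j| ≤ b) (hbin : ∀ i, |f.bin i| ≤ b)
    (hWmid : ∀ k i j, |f.Wmid k i j| ≤ b) (hbmid : ∀ k i, |f.bmid k i| ≤ b)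
    (hWout : ∀ i j, |f.Wout i j| ≤ b) (hbout : ∀ i, |f.bout i| ≤ b) : f.wnorm ≤ b := by
  refine sup_le (sup_le (sup_le (sup_le (sup_le ?_ ?_) ?_) ?_) ?_) ?_
  · exact matSup_le hb hWin
  · exact Real.iSup_le hbin hb
  · exact Real.iSup_le (fun k => matSup_le hb (hWmid k)) hb
  · exact Real.iSup_le (fun k => Real.iSup_le (hbmid k) hb) hb
  · exact matSup_le hb hWout
  · exact Real.iSup_le hbout hb

end FFNLemmas

lemma sum_ite_val_lt (N : ℕ) (p q : ℝ) :
    ∑ j : Fin (N + N), (if (j : ℕ) < N then p else q) = N * p + N * q := by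
  simp [Fin.sum_univ_add]

/-- The first `N` hidden neurons carry `a * relu (x r)` and the last `N` carry `a * relu (-x r)`;
the middle layers average within each half, so all weights shrink as `N` grows. -/
def coordFFN (de L N : ℕ) (r : Fin de) (a : ℝ) (u : Fin de → ℝ) : FFN de (N + N) L where
  Win j k := if k = r then (if (j : ℕ) < N then a else -a) else 0
  bin := 0
  Wmid _ j k := if ((j : ℕ) < N ↔ (k : ℕ) < N) then (N : ℝ)⁻¹ else 0
  bmid := 0
  Wout i j := if (j : ℕ) < N then u i / (N * a) else -(u i / (N * a))
  bout := 0

section CoordFFN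

variable {de L N : ℕ} (r : Fin de) {a : ℝ} (u : Fin de → ℝ)

lemma coordFFN_eval (hN : 0 < N) (ha : 0 < a) (x : Fin de → ℝ) :
    (coordFFN de L N r a u).eval x = x r • u := by
  set hidden : Fin (N + N) → ℝ := fun j => if (j : ℕ) < N then a * relu (x r) else a * relu (-x r)
  rw [FFN.eval_eq_of_hidden_fixed _ x hidden]
  · funext i
    simp only [coordFFN, hidden, Pi.zero_apply, add_zero, Pi.smul_apply, smul_eq_mul]
    calc ∑ j : Fin (N + N), _
        = (N : ℝ) * (u i / (N * a) * (a * relu (x r))) +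
            N * (-(u i / (N * a)) * (a * relu (-x r))) := by
          rw [← sum_ite_val_lt]; exact Finset.sum_congr rfl fun j _ => by split_ifs <;> rfl
      _ = u i * (relu (x r) - relu (-x r)) := by field_simp; ring
      _ = x r * u i := by rw [relu_sub_relu_neg, mul_comm]
  · funext j
    simp only [coordFFN, hidden, ite_mul, zero_mul, Finset.sum_ite_eq', Finset.mem_univ, if_true,
      Pi.zero_apply, add_zero]
    split_ifs
    · exact relu_mul_of_nonneg ha.le _
    · rw [neg_mul, ← mul_neg, relu_mul_of_nonneg ha.le]
  · intro k
    funext j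
    have hN' : (N : ℝ) ≠ 0 := by positivity
    have hfst : ∀ i : Fin N, ¬ N ≤ i := fun i => not_le.mpr i.isLt
    have hrelu : ∀ y, relu (a * relu y) = a * relu y := fun y =>
      relu_of_nonneg (mul_nonneg ha.le (relu_nonneg y))
    by_cases hj : (j : ℕ) < N <;> simp [coordFFN, hidden, hj, Fin.sum_univ_add, hN', hfst, hrelu]

lemma coordFFN_wnorm_le (ha : 0 < a) (hN : (N : ℝ)⁻¹ ≤ a) (hu : ∀ i, |u i| / (N * a) ≤ a) :
    (coordFFN de L N r a u).wnorm ≤ a := by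
  have hNa : ∀ i, |u i / (N * a)| ≤ a := fun i => by
    rw [abs_div, abs_of_nonneg (by positivity : (0 : ℝ) ≤ N * a)]; exact hu i
  refine FFN.wnorm_le _ ha.le (fun i j => ?_) (fun i => ?_) (fun k i j => ?_) (fun k i => ?_)
    (fun i j => ?_) (fun i => ?_) <;>
    simp only [coordFFN, Pi.zero_apply, abs_zero, ha.le] <;> split_ifs <;>
    simp [abs_of_pos ha, abs_of_nonneg, ha.le, hN, hNa]

end CoordFFN

lemma FFN.exists_wnorm_le_eval_eq_smul {de L : ℕ} (r : Fin de) (u : Fin de → ℝ) {b : ℝ}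
    (hb : 0 < b) : ∃ (w : ℕ) (f : FFN de w L), f.wnorm ≤ b ∧ ∀ x, f.eval x = x r • u := by
  obtain ⟨N, hN⟩ := exists_nat_gt (b⁻¹ + (∑ i, |u i|) / b ^ 2)
  have hsum : 0 ≤ (∑ i, |u i|) / b ^ 2 := by positivity
  have hNpos : (0 : ℝ) < N := by linarith [inv_pos.mpr hb]
  refine ⟨N + N, coordFFN de L N r b u, coordFFN_wnorm_le r u hb ?_ fun i => ?_,
    coordFFN_eval r u (by exact_mod_cast hNpos) hb⟩
  · exact inv_le_of_inv_le₀ hb (by linarith)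
  · rw [div_le_iff₀ (by positivity)]
    have hi : |u i| ≤ ∑ i, |u i| := Finset.single_le_sum (fun i _ => abs_nonneg (u i))
      (Finset.mem_univ i)
    have : ∑ i, |u i| ≤ N * b ^ 2 := by
      rw [← div_le_iff₀ (by positivity)]; linarith [inv_pos.mpr hb]
    nlinarith

def slot {ℓ : ℕ} (D : ℕ) (y : Fin D → ℝ) (t : Fin ℓ) : ℝ :=
  if h : D ≤ (t : ℕ) ∧ (t : ℕ) < 2 * D then y ⟨t - D, by omega⟩ else 0

lemma sum_ite_eq_slot {D ℓ : ℕ} (hDℓ : 2 * D ≤ ℓ) (y : Fin D → ℝ) (t : Fin ℓ) :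
    ∑ j : Fin D, (if t = ⟨D + j, by omega⟩ then y j else 0) = slot D y t := by
  unfold slot
  split_ifs with h
  · rw [Finset.sum_eq_single ⟨t - D, by omega⟩]
    · simp [h.1]
    · intro j _ hj
      rw [if_neg]
      rintro rfl
      exact hj (Fin.ext (by simp))
    · simp
  · exact Finset.sum_eq_zero fun j _ => if_neg fun e => h (by simp only [e, Fin.val_mk]; omega)

lemma Block.eval_of_ffn_eval_eq_smul {de m w L ℓ : ℕ} (B : Block de m w L)
    (H : Matrix (Fin de) (Fin ℓ) ℝ) {r : Fin de} {u : Fin de → ℝ}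
    (hffn : ∀ x, B.ffn.eval x = x r • u) :
    B.eval H = Matrix.of (fun i t => ((∑ j, (B.heads j).eval H) + H) r t * u i) +
      ((∑ j, (B.heads j).eval H) + H) := by
  ext i t
  simp [Block.eval, hffn]

lemma sum_copyHead_eval {D ℓ : ℕ} (hDℓ : 2 * D ≤ ℓ) (a μ : ℝ) (c x : Fin D → ℝ)
    {H : Matrix (Fin 5) (Fin ℓ) ℝ} (hH : IsEmbed5 H)
    (hx : ∀ t : Fin ℓ, ∀ h : (t : ℕ) < D, H 0 t = x ⟨t, h⟩) :
    ∑ j : Fin D, (copyHead ℓ a μ (μ * c j) ⟨j, by omega⟩ ⟨D + j, by omega⟩).eval H =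
      Matrix.of fun i t => if i = 1 then
        slot D (fun j => a ^ 2 * (1 - Real.cos (Real.pi / (2 * ℓ))) * μ * (x j + c j)) t
      else 0 := by
  have hxj : ∀ j : Fin D, H 0 ⟨j, by omega⟩ = x j := fun j => hx _ j.isLt
  ext i t
  simp only [copyHead_eval _ _ _ _ _ hH, Matrix.sum_apply, Matrix.of_apply, hxj]
  split_ifs with hi
  · rw [← sum_ite_eq_slot hDℓ]
    refine Finset.sum_congr rfl fun j _ => ?_
    simp only [hi, true_and]
    split_ifs <;> ring
  · simp [hi]

lemma exists_block_eval_eq_add_const {D ℓ : ℕ} (hDℓ : 2 * D ≤ ℓ) (hℓ : 0 < ℓ) {M : ℝ}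
    (hM : 0 < M) (c x : Fin D → ℝ) (hc : supNorm c ≤ M) {H : Matrix (Fin 5) (Fin ℓ) ℝ}
    (hH : IsEmbed5 H) (hx : ∀ t : Fin ℓ, ∀ h : (t : ℕ) < D, H 0 t = x ⟨t, h⟩) :
    ∃ (w : ℕ) (B : Block 5 D w 6), B.wnorm ≤ M ^ 2 ∧
      B.eval H = H + Matrix.of fun i t => if i = 0 then slot D (x + c) t else 0 := by
  set a := M ^ 2 / 2
  set μ := min (M ^ 2) M
  set ε := a ^ 2 * (1 - Real.cos (Real.pi / (2 * ℓ))) * μ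
  have hμ : 0 < μ := lt_min (by positivity) hM
  have hε : ε ≠ 0 := by
    have := cos_pi_div_two_mul_lt_one hℓ
    exact (mul_pos (mul_pos (by positivity) (by linarith)) hμ).ne'
  obtain ⟨w, f, hf, hfeval⟩ :=
    FFN.exists_wnorm_le_eval_eq_smul (de := 5) (L := 6) 1 ![ε⁻¹, -1, 0, 0, 0]
      (by positivity : 0 < M ^ 2)
  let B : Block 5 D w 6 :=
    ⟨fun j => copyHead ℓ a μ (μ * c j) ⟨j, by omega⟩ ⟨D + j, by omega⟩, f⟩
  refine ⟨w, B, sup_le (Real.iSup_le (fun j => copyHead_wnorm_le _ _ _ _ _ (by positivity)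
    (le_of_eq (by ring)) ?_ ?_) (by positivity)) hf, ?_⟩
  · rw [abs_of_pos hμ]; exact min_le_left _ _
  · rw [abs_mul, abs_of_pos hμ, sq]
    exact mul_le_mul (min_le_right _ _) ((abs_le_supNorm c j).trans hc) (abs_nonneg _) hM.le
  · rw [Block.eval_of_ffn_eval_eq_smul B H hfeval, sum_copyHead_eval hDℓ a μ c x hH hx]
    ext i t
    simp only [Matrix.add_apply, Matrix.of_apply, slot]
    by_cases h : D ≤ (t : ℕ) ∧ (t : ℕ) < 2 * D
    · fin_cases i <;> simp [h, hH.1 t]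
      field_simp
      simp only [ε]; ring
    · fin_cases i <;> simp [h, hH.1 t]

/-- Lemma: constant addition implemented by one transformer block. -/
theorem constant_addition :
    ∃ C : ℝ, 0 < C ∧
      ∀ (D ℓ : ℕ), 2 * D ≤ ℓ →
      ∀ M : ℝ, 0 < M →
      ∀ c x : Fin D → ℝ, supNorm x + supNorm c ≤ M →
      ∀ H : Matrix (Fin 5) (Fin ℓ) ℝ, IsEmbed5 H →
        (∀ t : Fin ℓ, ∀ h : (t : ℕ) < D, H 0 t = x ⟨(t : ℕ), h⟩) →
        (∀ t : Fin ℓ, D ≤ (t : ℕ) → H 0 t = 0) →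
        ∃ (w : ℕ) (B : Block 5 D w 6),
          B.wnorm ≤ C * (ℓ : ℝ) ^ 2 * M ^ 2 * matSup H ^ 2 ∧
          B.eval H = Matrix.of fun (i : Fin 5) (t : Fin ℓ) =>
            if h : D ≤ (t : ℕ) ∧ (t : ℕ) < 2 * D then
              (if i = 0 then x ⟨(t : ℕ) - D, by omega⟩ + c ⟨(t : ℕ) - D, by omega⟩
               else H i t)
            else H i t := by
  refine ⟨1, one_pos, fun D ℓ hDℓ M hM c x hxc H hH hx hx0 => ?_⟩
  rcases Nat.eq_zero_or_pos ℓ with rfl | hℓ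
  · obtain rfl : D = 0 := by omega
    have hffn : (⟨0, 0, 0, 0, 0, 0⟩ : FFN 5 0 6).wnorm ≤ 0 :=
      FFN.wnorm_le _ le_rfl (by simp) (by simp) (by simp) (by simp) (by simp) (by simp)
    exact ⟨0, ⟨Fin.elim0, ⟨0, 0, 0, 0, 0, 0⟩⟩, by simpa [Block.wnorm] using hffn,
      Matrix.ext fun _ t => t.elim0⟩
  · obtain ⟨w, B, hB, hBH⟩ := exists_block_eval_eq_add_const hDℓ hℓ hM c x
      (by linarith [supNorm_nonneg x]) hH hx
    have hℓ1 : (1 : ℝ) ≤ ℓ := Nat.one_le_cast.mpr hℓ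
    have hH1 := one_le_matSup_of_isEmbed5 hH hℓ
    refine ⟨w, B, hB.trans ?_, hBH.trans ?_⟩
    · calc M ^ 2 = 1 * 1 ^ 2 * M ^ 2 * 1 ^ 2 := by ring
        _ ≤ 1 * (ℓ : ℝ) ^ 2 * M ^ 2 * matSup H ^ 2 := by gcongr
    · ext i t
      simp only [Matrix.add_apply, Matrix.of_apply, slot]
      split_ifs with hi h <;> simp_all

end
end Paper
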